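/- Let σ be a deficient skew shape with height a and width b, i.e., a connected skew shape each of whose northwest corners occurs on or below its main anti-diagonal and each of whose southeast corners occurs on or above it (equivalently, δ(c) ≤ 0 for all c ∈ C(σ)). Then for every toggle-symmetric probability distribution μ on J(σ), the expected jaggedness of a μ-random subshape is at most 2ab/(a+b). -/

import Mathlib

open Finset
open scoped Classical

noncomputable section

/-- A skew Young diagram `λ/ν` (in English notation) with height `a` and width `b`.
Rows are indexed `1,…,a` from top to bottom and columns `1,…,b` from left to right;
row `i` consists of the boxes in columns `ν i + 1, …, λ i` (each row is nonempty).
Box `[i,j]` has its southeast corner at the lattice point `(i,j)`, the point `(0,0)`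
being the northwest corner of the bounding `a × b` rectangle. -/
structure SkewShape where
  a : ℕ
  b : ℕ
  ha : 1 ≤ a
  hb : 1 ≤ b
  lam : ℕ → ℕ
  nu : ℕ → ℕ
  lam_anti : ∀ i j : ℕ, 1 ≤ i → i ≤ j → j ≤ a → lam j ≤ lam i
  nu_anti : ∀ i j : ℕ, 1 ≤ i → i ≤ j → j ≤ a → nu j ≤ nu i
  nu_lt_lam : ∀ i : ℕ, 1 ≤ i → i ≤ a → nu i < lam i
  lam_le_b : ∀ i : ℕ, 1 ≤ i → i ≤ a → lam i ≤ b
  lam_one : lam 1 = b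
  nu_a : nu a = 0

namespace SkewShape

variable (σ : SkewShape)

/-- The boxes of `σ` : pairs `[i,j]` with `1 ≤ i ≤ a` and `ν i < j ≤ λ i`.
The poset `P_σ` is the set of boxes ordered componentwise:
`[i,j] ≤ [k,l]` iff `i ≤ k` and `j ≤ l` (the product order on `ℕ × ℕ`). -/
def cells : Finset (ℕ × ℕ) :=
  (Finset.Icc 1 σ.a ×ˢ Finset.Icc 1 σ.b).filter
    (fun c => σ.nu c.1 < c.2 ∧ c.2 ≤ σ.lam c.1)

/-- The poset `P_σ` of boxes of `σ` is connected: it is nonempty, and any two boxes are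
joined by a walk along comparable pairs of boxes. -/
def Connected : Prop :=
  σ.cells.Nonempty ∧ ∀ p ∈ σ.cells, ∀ q ∈ σ.cells,
    Relation.ReflTransGen
      (fun x y : ℕ × ℕ => x ∈ σ.cells ∧ y ∈ σ.cells ∧ (x ≤ y ∨ y ≤ x)) p q

/-- `I` is an order ideal of `P_σ`, i.e. a subshape of `σ`. -/
def IsIdeal (I : Finset (ℕ × ℕ)) : Prop :=
  I ⊆ σ.cells ∧ ∀ p ∈ I, ∀ q ∈ σ.cells, q ≤ p → q ∈ I

/-- The set `J(σ)` of all order ideals of `P_σ` (equivalently, subshapes of `σ`). -/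
def idealsFinset : Finset (Finset (ℕ × ℕ)) :=
  σ.cells.powerset.filter fun I => σ.IsIdeal I

/-- Box `p` can be toggled in to the order ideal `I`. -/
def CanToggleIn (I : Finset (ℕ × ℕ)) (p : ℕ × ℕ) : Prop :=
  p ∈ σ.cells ∧ p ∉ I ∧ σ.IsIdeal (insert p I)

/-- Box `p` can be toggled out of the order ideal `I`. -/
def CanToggleOut (I : Finset (ℕ × ℕ)) (p : ℕ × ℕ) : Prop :=
  p ∈ I ∧ σ.IsIdeal (I.erase p)

/-- The jaggedness of `I`: the number of boxes that can be toggled in,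
plus the number of boxes that can be toggled out. -/
def jag (I : Finset (ℕ × ℕ)) : ℕ :=
  (σ.cells.filter fun p => σ.CanToggleIn I p).card +
  (σ.cells.filter fun p => σ.CanToggleOut I p).card

/-- The probability, under `μ`, that a random order ideal of `P_σ` satisfies `E`. -/
def pr (μ : Finset (ℕ × ℕ) → ℝ) (E : Finset (ℕ × ℕ) → Prop) : ℝ :=
  ∑ I ∈ σ.idealsFinset.filter E, μ I

/-- `μ` is a probability distribution on `J(σ)`. -/
def IsProbDist (μ : Finset (ℕ × ℕ) → ℝ) : Prop :=
  (∀ I, 0 ≤ μ I) ∧ (∑ I ∈ σ.idealsFinset, μ I = 1)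

/-- `μ` is toggle-symmetric: for every box `p` of `σ`, the probability that `p` can be
toggled in equals the probability that `p` can be toggled out. -/
def ToggleSymmetric (μ : Finset (ℕ × ℕ) → ℝ) : Prop :=
  ∀ p ∈ σ.cells,
    σ.pr μ (fun I => σ.CanToggleIn I p) = σ.pr μ (fun I => σ.CanToggleOut I p)

/-- The expectation of the statistic `f` with respect to `μ`. -/
def expect (μ : Finset (ℕ × ℕ) → ℝ) (f : Finset (ℕ × ℕ) → ℝ) : ℝ :=
  ∑ I ∈ σ.idealsFinset, μ I * f I

/-- `c` is a northwest outward corner of `σ`, occurring at the lattice point `c = (i,j)`: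
the northwest boundary of `σ` turns at `(i,j)` with its two steps
(the top edge of box `[i+1,j]` and the left edge of box `[i,j+1]`)
not bordering a common box of `σ`. -/
def IsNWCorner (c : ℕ × ℕ) : Prop :=
  (c.1 + 1, c.2) ∈ σ.cells ∧ (c.1, c.2 + 1) ∈ σ.cells ∧ (c.1, c.2) ∉ σ.cells

/-- `c` is a southeast outward corner of `σ`, occurring at the lattice point `c = (i,j)`:
the southeast boundary of `σ` turns at `(i,j)` with its two steps
(the right edge of box `[i+1,j]` and the bottom edge of box `[i,j+1]`)
not bordering a common box of `σ`. -/
def IsSECorner (c : ℕ × ℕ) : Prop :=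
  (c.1 + 1, c.2) ∈ σ.cells ∧ (c.1, c.2 + 1) ∈ σ.cells ∧ (c.1 + 1, c.2 + 1) ∉ σ.cells

/-- The set of northwest outward corners of `σ`. -/
def nwCorners : Finset (ℕ × ℕ) :=
  (Finset.range (σ.a + 1) ×ˢ Finset.range (σ.b + 1)).filter fun c => σ.IsNWCorner c

/-- The set of southeast outward corners of `σ`.
(Together, `nwCorners` and `seCorners` form the set `C(σ)` of outward corners.) -/
def seCorners : Finset (ℕ × ℕ) :=
  (Finset.range (σ.a + 1) ×ˢ Finset.range (σ.b + 1)).filter fun c => σ.IsSECorner c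

/-- The displacement `δ(c) = 1 − i/a − j/b` of a northwest corner occurring at `(i,j)`. -/
def nwDisp (c : ℕ × ℕ) : ℝ := 1 - (c.1 : ℝ) / (σ.a : ℝ) - (c.2 : ℝ) / (σ.b : ℝ)

/-- The displacement `δ(c) = −1 + i/a + j/b` of a southeast corner occurring at `(i,j)`. -/
def seDisp (c : ℕ × ℕ) : ℝ := -1 + (c.1 : ℝ) / (σ.a : ℝ) + (c.2 : ℝ) / (σ.b : ℝ)

/-- The lattice path of the subshape `I` includes both steps of the northwest corner at
`c = (i,j)`: neither box `[i+1,j]` nor box `[i,j+1]` belongs to `I`. -/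
def NWInPath (c : ℕ × ℕ) (I : Finset (ℕ × ℕ)) : Prop :=
  (c.1 + 1, c.2) ∉ I ∧ (c.1, c.2 + 1) ∉ I

/-- The lattice path of the subshape `I` includes both steps of the southeast corner at
`c = (i,j)`: both boxes `[i+1,j]` and `[i,j+1]` belong to `I`. -/
def SEInPath (c : ℕ × ℕ) (I : Finset (ℕ × ℕ)) : Prop :=
  (c.1 + 1, c.2) ∈ I ∧ (c.1, c.2 + 1) ∈ I

/-- The correction term `Σ_{c ∈ C(σ)} δ(c) · P_μ(c)`, where `P_μ(c)` is the
`μ`-probability that the lattice path of a random subshape includes both steps of `c`. -/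
def cornerCorrection (μ : Finset (ℕ × ℕ) → ℝ) : ℝ :=
  (∑ c ∈ σ.nwCorners, σ.nwDisp c * σ.pr μ (NWInPath c)) +
  (∑ c ∈ σ.seCorners, σ.seDisp c * σ.pr μ (SEInPath c))

end SkewShape

namespace SkewShape

variable (σ : SkewShape)

/-- `σ` is balanced: connected, with every outward corner of displacement `0`
(i.e. occurring on the main anti-diagonal from `(a,0)` to `(0,b)`). -/
def Balanced : Prop :=
  σ.Connected ∧ (∀ c ∈ σ.nwCorners, σ.nwDisp c = 0) ∧ ∀ c ∈ σ.seCorners, σ.seDisp c = 0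

/-- `σ` is abundant: connected, with every outward corner of displacement `≥ 0`. -/
def Abundant : Prop :=
  σ.Connected ∧ (∀ c ∈ σ.nwCorners, 0 ≤ σ.nwDisp c) ∧ ∀ c ∈ σ.seCorners, 0 ≤ σ.seDisp c

/-- `σ` is deficient: connected, with every outward corner of displacement `≤ 0`. -/
def Deficient : Prop :=
  σ.Connected ∧ (∀ c ∈ σ.nwCorners, σ.nwDisp c ≤ 0) ∧ ∀ c ∈ σ.seCorners, σ.seDisp c ≤ 0

end SkewShape

/-! Give each box the weight `w`, `h = 2ab/(a+b)` times the displacement of its centre from the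
anti-diagonal. Toggle-symmetry makes the expectations of `Σ_{out} w` and `Σ_{in} w` agree, so
`E[jag] = E[Σ_{out} (1 - w) + Σ_{in} (1 + w)]`, and it suffices to bound the latter by `h` for
each subshape `I`.

Follow the boundary path of `I` from `(0,b)` to `(a,0)`. Each of its descents offers one box to
toggle out (at its top) and one to toggle in (at its bottom), and the two terms add up to `h/b`
times the horizontal drop of the descent; the drops add up to `b`. An offered box that lies
outside `σ` sits at an outward corner `c` of `σ` (or at an end of the path), where its term
`-h δ(c)` is nonnegative because `σ` is deficient; so the actual count is at most the total over
descents. -/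

namespace SkewShape

variable (σ : SkewShape) {I : Finset (ℕ × ℕ)}

lemma mem_cells {i j : ℕ} :
    (i, j) ∈ σ.cells ↔ 1 ≤ i ∧ i ≤ σ.a ∧ σ.nu i < j ∧ j ≤ σ.lam i := by
  simp only [cells, mem_filter, mem_product, mem_Icc]
  constructor
  · rintro ⟨⟨⟨hi1, hia⟩, -⟩, hnu, hlam⟩
    exact ⟨hi1, hia, hnu, hlam⟩
  · rintro ⟨hi1, hia, hnu, hlam⟩
    exact ⟨⟨⟨hi1, hia⟩, by omega, hlam.trans (σ.lam_le_b i hi1 hia)⟩, hnu, hlam⟩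

lemma isIdeal_of_mem_idealsFinset (hI : I ∈ σ.idealsFinset) : σ.IsIdeal I :=
  (mem_filter.1 hI).2

lemma mem_of_le_of_nu_lt (hI : σ.IsIdeal I) {k l i j : ℕ}
    (hkl : (k, l) ∈ I) (hi : 1 ≤ i) (hle : (i, j) ≤ (k, l)) (hnu : σ.nu i < j) : (i, j) ∈ I := by
  obtain ⟨-, hka, -, hl⟩ := σ.mem_cells.1 (hI.1 hkl)
  obtain ⟨hik, hjl⟩ := Prod.mk_le_mk.1 hle
  refine hI.2 _ hkl _ (σ.mem_cells.2 ⟨hi, hik.trans hka, hnu, ?_⟩) hle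
  exact hjl.trans (hl.trans (σ.lam_anti i k hi hik hka))

lemma isIdeal_erase_iff (hI : σ.IsIdeal I) {p : ℕ × ℕ} (hp : p ∈ I) :
    σ.IsIdeal (I.erase p) ↔ ∀ q ∈ I, p ≤ q → q = p := by
  constructor
  · intro h q hq hpq
    by_contra hne
    exact (h.2 q (mem_erase.2 ⟨hne, hq⟩) p (hI.1 hp) hpq |> mem_erase.1).1 rfl
  · refine fun hmax => ⟨(erase_subset p I).trans hI.1, fun q hq x hx hxq => ?_⟩
    obtain ⟨hqp, hqI⟩ := mem_erase.1 hq
    refine mem_erase.2 ⟨?_, hI.2 q hqI x hx hxq⟩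
    rintro rfl
    exact hqp (hmax q hqI hxq)

lemma isIdeal_insert_iff (hI : σ.IsIdeal I) {p : ℕ × ℕ} (hp : p ∈ σ.cells) :
    σ.IsIdeal (insert p I) ↔ ∀ q ∈ σ.cells, q ≤ p → q ≠ p → q ∈ I := by
  constructor
  · intro h q hq hqp hne
    exact (mem_insert.1 (h.2 p (mem_insert_self p I) q hq hqp)).resolve_left hne
  · refine fun hbelow => ⟨insert_subset hp hI.1, fun q hq x hx hxq => ?_⟩
    rcases mem_insert.1 hq with rfl | hq
    · by_cases hxp : x = q
      · exact hxp ▸ mem_insert_self x I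
      · exact mem_insert_of_mem (hbelow x hx hxq hxp)
    · exact mem_insert_of_mem (hI.2 q hq x hx hxq)

/-- The column of the last box of `I` in row `i` (`ν i` if that row of `I` is empty). The values
`b` at row `0` and `0` below row `a` make the boundary path of `I` start at `(0,b)` and end at
`(a,0)`. -/
def rowEnd (I : Finset (ℕ × ℕ)) (i : ℕ) : ℕ :=
  if i = 0 then σ.b else if σ.a < i then 0 else
    max (σ.nu i) ((I.filter (fun p => p.1 = i)).sup Prod.snd)

lemma rowEnd_zero : σ.rowEnd I 0 = σ.b := by
  simp [rowEnd]

lemma rowEnd_of_lt {i : ℕ} (h : σ.a < i) : σ.rowEnd I i = 0 := by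
  simp [rowEnd, h, show i ≠ 0 by omega]

lemma rowEnd_of_le {i : ℕ} (h1 : 1 ≤ i) (h2 : i ≤ σ.a) :
    σ.rowEnd I i = max (σ.nu i) ((I.filter (fun p => p.1 = i)).sup Prod.snd) := by
  simp [rowEnd, show i ≠ 0 by omega, not_lt.2 h2]

lemma nu_le_rowEnd {i : ℕ} (h1 : 1 ≤ i) (h2 : i ≤ σ.a) : σ.nu i ≤ σ.rowEnd I i := by
  rw [σ.rowEnd_of_le h1 h2]
  exact le_max_left _ _

lemma mem_iff_le_rowEnd (hI : σ.IsIdeal I) {i j : ℕ} (h1 : 1 ≤ i) (h2 : i ≤ σ.a) :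
    (i, j) ∈ I ↔ σ.nu i < j ∧ j ≤ σ.rowEnd I i := by
  constructor
  · intro hij
    refine ⟨(σ.mem_cells.1 (hI.1 hij)).2.2.1, ?_⟩
    rw [σ.rowEnd_of_le h1 h2]
    exact le_max_of_le_right
      (le_sup (f := Prod.snd) (s := I.filter (fun p => p.1 = i)) (mem_filter.2 ⟨hij, rfl⟩))
  · rintro ⟨hnu, hj⟩
    rw [σ.rowEnd_of_le h1 h2, le_max_iff] at hj
    rcases hj with hj | hj
    · omega
    obtain ⟨⟨k, l⟩, hkl, hjl⟩ := (Finset.le_sup_iff (by simp; omega)).1 hj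
    obtain ⟨hklI, rfl⟩ : (k, l) ∈ I ∧ k = i := mem_filter.1 hkl
    exact σ.mem_of_le_of_nu_lt hI hklI h1 (Prod.mk_le_mk.2 ⟨le_rfl, hjl⟩) hnu

lemma rowEnd_le_lam (hI : σ.IsIdeal I) {i : ℕ} (h1 : 1 ≤ i) (h2 : i ≤ σ.a) :
    σ.rowEnd I i ≤ σ.lam i := by
  by_contra! hlt
  have hmem := (σ.mem_iff_le_rowEnd hI h1 h2).2 ⟨(σ.nu_lt_lam i h1 h2).trans hlt, le_rfl⟩
  exact hlt.not_ge (σ.mem_cells.1 (hI.1 hmem)).2.2.2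

lemma rowEnd_antitone (hI : σ.IsIdeal I) : Antitone (σ.rowEnd I) := by
  refine antitone_nat_of_succ_le fun i => ?_
  by_cases hia : σ.a < i + 1
  · rw [σ.rowEnd_of_lt hia]
    exact Nat.zero_le _
  rcases Nat.eq_zero_or_pos i with rfl | hi
  · rw [σ.rowEnd_zero, ← σ.lam_one]
    exact σ.rowEnd_le_lam hI le_rfl (by omega)
  by_contra! hlt
  have hnu : σ.nu i < σ.rowEnd I (i + 1) :=
    (σ.nu_le_rowEnd hi (by omega)).trans_lt hlt
  have hlow := (σ.mem_iff_le_rowEnd hI (by omega) (by omega)).2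
    ⟨(σ.nu_anti i (i + 1) hi (by omega) (by omega)).trans_lt hnu, le_rfl⟩
  have hup := σ.mem_of_le_of_nu_lt hI hlow hi (Prod.mk_le_mk.2 ⟨by omega, le_rfl⟩) hnu
  exact hlt.not_ge ((σ.mem_iff_le_rowEnd hI hi (by omega)).1 hup).2

lemma canToggleOut_iff (hI : σ.IsIdeal I) {i j : ℕ} (h1 : 1 ≤ i) (h2 : i ≤ σ.a) :
    σ.CanToggleOut I (i, j) ↔
      σ.nu i < j ∧ j = σ.rowEnd I i ∧ σ.rowEnd I (i + 1) < j := by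
  have hmem : ∀ {l}, (i, l) ∈ I ↔ σ.nu i < l ∧ l ≤ σ.rowEnd I i := σ.mem_iff_le_rowEnd hI h1 h2
  constructor
  · rintro ⟨hij, herase⟩
    have hmax := (σ.isIdeal_erase_iff hI hij).1 herase
    obtain ⟨hnu, hj⟩ := hmem.1 hij
    refine ⟨hnu, ?_, ?_⟩
    · by_contra hne
      have := hmax _ (hmem.2 ⟨by omega, by omega⟩) (Prod.mk_le_mk.2 ⟨le_rfl, j.le_succ⟩)
      simp at this
    · by_contra! hle
      have hia : i + 1 ≤ σ.a := by
        by_contra hia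
        rw [σ.rowEnd_of_lt (by omega)] at hle
        omega
      have hnu' := (σ.nu_anti i (i + 1) h1 (by omega) hia).trans_lt hnu
      have := hmax _ ((σ.mem_iff_le_rowEnd hI (by omega) hia).2 ⟨hnu', hle⟩)
        (Prod.mk_le_mk.2 ⟨i.le_succ, le_rfl⟩)
      simp at this
  · rintro ⟨hnu, rfl, hlt⟩
    have hij := hmem.2 ⟨hnu, le_rfl⟩
    refine ⟨hij, (σ.isIdeal_erase_iff hI hij).2 fun ⟨k, l⟩ hkl hle => ?_⟩
    obtain ⟨hik, hjl⟩ := Prod.mk_le_mk.1 hle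
    obtain ⟨hk1, hka, -⟩ := σ.mem_cells.1 (hI.1 hkl)
    have hlk := ((σ.mem_iff_le_rowEnd hI hk1 hka).1 hkl).2
    rcases hik.eq_or_lt with rfl | hik
    · rw [le_antisymm hlk hjl]
    · have := σ.rowEnd_antitone hI (show i + 1 ≤ k by omega)
      omega

lemma canToggleIn_iff (hI : σ.IsIdeal I) {k j : ℕ} (hp : (k + 1, j) ∈ σ.cells) :
    σ.CanToggleIn I (k + 1, j) ↔
      j = σ.rowEnd I (k + 1) + 1 ∧ σ.rowEnd I (k + 1) < σ.rowEnd I k := by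
  obtain ⟨-, hka, hnu, hlam⟩ := σ.mem_cells.1 hp
  have hmem : ∀ {l}, (k + 1, l) ∈ I ↔ σ.nu (k + 1) < l ∧ l ≤ σ.rowEnd I (k + 1) :=
    σ.mem_iff_le_rowEnd hI (Nat.le_add_left 1 k) hka
  constructor
  · rintro ⟨-, hnot, hins⟩
    have hbelow := (σ.isIdeal_insert_iff hI hp).1 hins
    have hgt : σ.rowEnd I (k + 1) < j := by
      by_contra! hle
      exact hnot (hmem.2 ⟨hnu, hle⟩)
    have hj : j = σ.rowEnd I (k + 1) + 1 := by
      by_contra hne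
      have := σ.nu_le_rowEnd (I := I) (Nat.le_add_left 1 k) hka
      have hleft : (k + 1, j - 1) ∈ σ.cells := σ.mem_cells.2 ⟨by omega, hka, by omega, by omega⟩
      have := hbelow _ hleft (Prod.mk_le_mk.2 ⟨le_rfl, j.sub_le 1⟩) (by simp; omega)
      have := (hmem.1 this).2
      omega
    refine ⟨hj, lt_of_lt_of_le hgt ?_⟩
    rcases Nat.eq_zero_or_pos k with rfl | hk
    · rw [σ.rowEnd_zero]
      exact hlam.trans (σ.lam_le_b 1 le_rfl hka)
    by_cases hnuk : σ.nu k < j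
    · have hup : (k, j) ∈ σ.cells := σ.mem_cells.2
        ⟨hk, by omega, hnuk, hlam.trans (σ.lam_anti k (k + 1) hk k.le_succ hka)⟩
      have := hbelow _ hup (Prod.mk_le_mk.2 ⟨k.le_succ, le_rfl⟩) (by simp)
      exact ((σ.mem_iff_le_rowEnd hI hk (by omega)).1 this).2
    · exact (not_lt.1 hnuk).trans (σ.nu_le_rowEnd hk (by omega))
  · rintro ⟨rfl, hlt⟩
    refine ⟨hp, fun h => by simpa using (hmem.1 h).2, (σ.isIdeal_insert_iff hI hp).2 ?_⟩
    rintro ⟨l, m⟩ hlm hle hne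
    obtain ⟨hl1, hla, hnum, -⟩ := σ.mem_cells.1 hlm
    obtain ⟨hlk, hmj⟩ := Prod.mk_le_mk.1 hle
    refine (σ.mem_iff_le_rowEnd hI hl1 hla).2 ⟨hnum, ?_⟩
    rcases hlk.eq_or_lt with rfl | hlk
    · have : m ≠ σ.rowEnd I (k + 1) + 1 := fun h => hne (by rw [h])
      omega
    · have := σ.rowEnd_antitone hI (Nat.le_of_lt_succ hlk)
      omega

def toggleOutBoxes (I : Finset (ℕ × ℕ)) : Finset (ℕ × ℕ) :=
  σ.cells.filter (σ.CanToggleOut I)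

def toggleInBoxes (I : Finset (ℕ × ℕ)) : Finset (ℕ × ℕ) :=
  σ.cells.filter (σ.CanToggleIn I)

lemma toggleOutBoxes_eq_image (hI : σ.IsIdeal I) :
    σ.toggleOutBoxes I =
      ((Icc 1 σ.a).filter fun i =>
          σ.nu i < σ.rowEnd I i ∧ σ.rowEnd I (i + 1) < σ.rowEnd I i).image
        fun i => (i, σ.rowEnd I i) := by
  ext ⟨i, j⟩
  simp only [toggleOutBoxes, mem_filter, mem_image, mem_Icc, Prod.mk.injEq]
  constructor
  · rintro ⟨hp, ht⟩
    obtain ⟨h1, h2, -⟩ := σ.mem_cells.1 hp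
    obtain ⟨hnu, rfl, hlt⟩ := (σ.canToggleOut_iff hI h1 h2).1 ht
    exact ⟨i, ⟨⟨h1, h2⟩, hnu, hlt⟩, rfl, rfl⟩
  · rintro ⟨i, ⟨⟨h1, h2⟩, hnu, hlt⟩, rfl, rfl⟩
    exact ⟨σ.mem_cells.2 ⟨h1, h2, hnu, σ.rowEnd_le_lam hI h1 h2⟩,
      (σ.canToggleOut_iff hI h1 h2).2 ⟨hnu, rfl, hlt⟩⟩

lemma toggleInBoxes_eq_image (hI : σ.IsIdeal I) :
    σ.toggleInBoxes I =
      ((range σ.a).filter fun k =>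
          σ.rowEnd I (k + 1) < σ.lam (k + 1) ∧ σ.rowEnd I (k + 1) < σ.rowEnd I k).image
        fun k => (k + 1, σ.rowEnd I (k + 1) + 1) := by
  ext ⟨i, j⟩
  simp only [toggleInBoxes, mem_filter, mem_image, mem_range, Prod.mk.injEq]
  constructor
  · rintro ⟨hp, ht⟩
    obtain ⟨h1, h2, -, hlam⟩ := σ.mem_cells.1 hp
    obtain ⟨k, rfl⟩ : ∃ k, i = k + 1 := ⟨i - 1, by omega⟩
    obtain ⟨rfl, hlt⟩ := (σ.canToggleIn_iff hI hp).1 ht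
    exact ⟨k, ⟨by omega, by omega, hlt⟩, rfl, rfl⟩
  · rintro ⟨k, ⟨hk, hlam, hlt⟩, rfl, rfl⟩
    have hnu := σ.nu_le_rowEnd (I := I) (Nat.le_add_left 1 k) hk
    have hp : (k + 1, σ.rowEnd I (k + 1) + 1) ∈ σ.cells :=
      σ.mem_cells.2 ⟨by omega, hk, by omega, hlam⟩
    exact ⟨hp, (σ.canToggleIn_iff hI hp).2 ⟨rfl, hlt⟩⟩

/-- If row `i + 1` ended weakly left of where row `i` starts, no pair of comparable boxes would
connect the rows `≤ i` with the rows `> i`. -/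
lemma nu_lt_lam_succ (hc : σ.Connected) {i : ℕ} (h1 : 1 ≤ i) (h2 : i < σ.a) :
    σ.nu i < σ.lam (i + 1) := by
  by_contra! hle
  have hp : (i, σ.lam i) ∈ σ.cells :=
    σ.mem_cells.2 ⟨h1, h2.le, σ.nu_lt_lam i h1 h2.le, le_rfl⟩
  have hq : (i + 1, σ.lam (i + 1)) ∈ σ.cells :=
    σ.mem_cells.2 ⟨by omega, h2, σ.nu_lt_lam _ (by omega) h2, le_rfl⟩
  suffices ∀ x, Relation.ReflTransGen
      (fun x y : ℕ × ℕ => x ∈ σ.cells ∧ y ∈ σ.cells ∧ (x ≤ y ∨ y ≤ x)) (i, σ.lam i) x →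
      x.1 ≤ i by
    simpa using this _ (hc.2 _ hp _ hq)
  intro x hx
  induction hx with
  | refl => exact le_rfl
  | @tail y z _ hyz ih =>
    obtain ⟨k, l⟩ := y
    obtain ⟨m, n⟩ := z
    obtain ⟨hy, hz, hcomp⟩ := hyz
    obtain ⟨hk1, -, hnul, -⟩ := σ.mem_cells.1 hy
    obtain ⟨-, hma, -, hnm⟩ := σ.mem_cells.1 hz
    dsimp only at ih ⊢
    by_contra! him
    have hnl : n < l := calc
      n ≤ σ.lam m := hnm
      _ ≤ σ.lam (i + 1) := σ.lam_anti (i + 1) m (by omega) him hma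
      _ ≤ σ.nu i := hle
      _ ≤ σ.nu k := σ.nu_anti k i hk1 ih (by omega)
      _ < l := hnul
    rcases hcomp with h | h
    · exact hnl.not_ge (Prod.mk_le_mk.1 h).2
    · exact him.not_ge ((Prod.mk_le_mk.1 h).1.trans ih)

lemma mem_nwCorners (hc : σ.Connected) {i : ℕ} (h1 : 1 ≤ i) (h2 : i ≤ σ.a)
    (hnu : σ.rowEnd I i = σ.nu i)
    (hdesc : σ.rowEnd I (i + 1) < σ.rowEnd I i) : (i, σ.nu i) ∈ σ.nwCorners := by
  have hia : i < σ.a := by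
    by_contra hia
    rw [σ.rowEnd_of_lt (by omega), hnu, show i = σ.a by omega, σ.nu_a] at hdesc
    exact hdesc.false
  have hnu' := σ.nu_le_rowEnd (I := I) (i := i + 1) (by omega) hia
  have hconn := σ.nu_lt_lam_succ hc h1 hia
  have hlam := σ.nu_lt_lam i h1 h2
  have hb := σ.lam_le_b i h1 h2
  simp only [nwCorners, IsNWCorner, mem_filter, mem_product, mem_range, mem_cells]
  omega

lemma mem_seCorners (hc : σ.Connected) (hI : σ.IsIdeal I) {k : ℕ} (hk : k < σ.a)
    (hlam : σ.rowEnd I (k + 1) = σ.lam (k + 1))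
    (hdesc : σ.rowEnd I (k + 1) < σ.rowEnd I k) : (k, σ.lam (k + 1)) ∈ σ.seCorners := by
  have hk1 : 1 ≤ k := by
    by_contra hk0
    obtain rfl : k = 0 := by omega
    rw [σ.rowEnd_zero, hlam, σ.lam_one] at hdesc
    exact hdesc.false
  have hle := σ.rowEnd_le_lam hI hk1 hk.le
  have hconn := σ.nu_lt_lam_succ hc hk1 hk
  have hlam' := σ.nu_lt_lam (k + 1) (by omega) hk
  have hb := σ.lam_le_b k hk1 hk.le
  simp only [seCorners, IsSECorner, mem_filter, mem_product, mem_range, mem_cells]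
  omega

lemma nwDisp_rowEnd_nonpos (hdef : σ.Deficient) {k : ℕ} (hk : k ≤ σ.a)
    (hdesc : σ.rowEnd I (k + 1) < σ.rowEnd I k) (hstuck : k = 0 ∨ σ.rowEnd I k ≤ σ.nu k) :
    σ.nwDisp (k, σ.rowEnd I k) ≤ 0 := by
  rcases Nat.eq_zero_or_pos k with rfl | hk1
  · have hb : (σ.b : ℝ) ≠ 0 := by have := σ.hb; positivity
    simp [nwDisp, σ.rowEnd_zero, hb]
  · have hnu := le_antisymm (hstuck.resolve_left hk1.ne') (σ.nu_le_rowEnd hk1 hk)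
    rw [hnu]
    exact hdef.2.1 _ (σ.mem_nwCorners hdef.1 hk1 hk hnu hdesc)

lemma seDisp_rowEnd_nonpos (hdef : σ.Deficient) (hI : σ.IsIdeal I) {k : ℕ} (hk : k ≤ σ.a)
    (hdesc : σ.rowEnd I (k + 1) < σ.rowEnd I k)
    (hstuck : k = σ.a ∨ σ.lam (k + 1) ≤ σ.rowEnd I (k + 1)) :
    σ.seDisp (k, σ.rowEnd I (k + 1)) ≤ 0 := by
  rcases hk.eq_or_lt with rfl | hka
  · have ha : (σ.a : ℝ) ≠ 0 := by have := σ.ha; positivity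
    simp [seDisp, σ.rowEnd_of_lt (lt_add_one σ.a), ha]
  · have hlam := le_antisymm (σ.rowEnd_le_lam hI (by omega) hka) (hstuck.resolve_left hka.ne)
    rw [hlam]
    exact hdef.2.2 _ (σ.mem_seCorners hdef.1 hI hka hlam hdesc)

def jagBound : ℝ := 2 * (σ.a : ℝ) * (σ.b : ℝ) / ((σ.a : ℝ) + (σ.b : ℝ))

/-- `jagBound` times the displacement `1 - x/a - y/b` of the centre `(x, y) = (i - 1/2, j - 1/2)`
of the box `p = [i,j]`. -/
def boxWeight (p : ℕ × ℕ) : ℝ := 1 + σ.jagBound * σ.nwDisp p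

lemma jagBound_nonneg : 0 ≤ σ.jagBound := by
  unfold jagBound
  positivity

lemma one_sub_boxWeight (p : ℕ × ℕ) : 1 - σ.boxWeight p = -(σ.jagBound * σ.nwDisp p) := by
  unfold boxWeight
  ring

lemma one_add_boxWeight_succ (k j : ℕ) :
    1 + σ.boxWeight (k + 1, j + 1) = -(σ.jagBound * σ.seDisp (k, j)) := by
  have ha : (σ.a : ℝ) ≠ 0 := by have := σ.ha; positivity
  have hb : (σ.b : ℝ) ≠ 0 := by have := σ.hb; positivity
  have hab : (σ.a : ℝ) + σ.b ≠ 0 := by have := σ.ha; positivity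
  simp only [boxWeight, jagBound, nwDisp, seDisp]
  push_cast
  field_simp
  ring

lemma boxWeight_descent (k x y : ℕ) :
    (1 - σ.boxWeight (k, x)) + (1 + σ.boxWeight (k + 1, y + 1)) =
      σ.jagBound / σ.b * ((x : ℝ) - y) := by
  have hb : (σ.b : ℝ) ≠ 0 := by have := σ.hb; positivity
  rw [σ.one_sub_boxWeight, σ.one_add_boxWeight_succ]
  simp only [nwDisp, seDisp]
  field_simp
  ring

lemma sum_filter_lt_sub_eq {r : ℕ → ℕ} (hr : Antitone r) (n : ℕ) :
    ∑ k ∈ (range n).filter (fun k => r (k + 1) < r k), ((r k : ℝ) - r (k + 1)) =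
      r 0 - r n := by
  rw [sum_filter_of_ne, sum_range_sub' (fun k => (r k : ℝ))]
  intro k _ hne
  exact lt_of_le_of_ne (hr k.le_succ) fun h => hne (by rw [h, sub_self])

def descents (I : Finset (ℕ × ℕ)) : Finset ℕ :=
  (range (σ.a + 1)).filter fun k => σ.rowEnd I (k + 1) < σ.rowEnd I k

lemma sum_toggleOutBoxes_le (hdef : σ.Deficient) (hI : σ.IsIdeal I) :
    ∑ p ∈ σ.toggleOutBoxes I, (1 - σ.boxWeight p) ≤
      ∑ k ∈ σ.descents I, (1 - σ.boxWeight (k, σ.rowEnd I k)) := by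
  rw [σ.toggleOutBoxes_eq_image hI, sum_image fun _ _ _ _ h => congrArg Prod.fst h]
  refine sum_le_sum_of_subset_of_nonneg (fun k => ?_) fun k hk hkn => ?_
  · simp only [descents, mem_filter, mem_Icc, mem_range]
    omega
  · simp only [descents, mem_filter, mem_Icc, mem_range] at hk hkn
    rw [one_sub_boxWeight, neg_nonneg]
    exact mul_nonpos_of_nonneg_of_nonpos σ.jagBound_nonneg
      (σ.nwDisp_rowEnd_nonpos hdef (by omega) hk.2 (by omega))

lemma sum_toggleInBoxes_le (hdef : σ.Deficient) (hI : σ.IsIdeal I) :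
    ∑ p ∈ σ.toggleInBoxes I, (1 + σ.boxWeight p) ≤
      ∑ k ∈ σ.descents I, (1 + σ.boxWeight (k + 1, σ.rowEnd I (k + 1) + 1)) := by
  rw [σ.toggleInBoxes_eq_image hI, sum_image fun _ _ _ _ h => by simpa using congrArg Prod.fst h]
  refine sum_le_sum_of_subset_of_nonneg (fun k => ?_) fun k hk hkn => ?_
  · simp only [descents, mem_filter, mem_range]
    omega
  · simp only [descents, mem_filter, mem_range] at hk hkn
    rw [one_add_boxWeight_succ, neg_nonneg]
    exact mul_nonpos_of_nonneg_of_nonpos σ.jagBound_nonneg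
      (σ.seDisp_rowEnd_nonpos hdef hI (by omega) hk.2 (by omega))

theorem sum_toggleOutBoxes_add_sum_toggleInBoxes_le (hdef : σ.Deficient) (hI : σ.IsIdeal I) :
    ∑ p ∈ σ.toggleOutBoxes I, (1 - σ.boxWeight p) +
        ∑ p ∈ σ.toggleInBoxes I, (1 + σ.boxWeight p) ≤ σ.jagBound := by
  have hb : (σ.b : ℝ) ≠ 0 := by have := σ.hb; positivity
  calc _ ≤ ∑ k ∈ σ.descents I, ((1 - σ.boxWeight (k, σ.rowEnd I k)) +
          (1 + σ.boxWeight (k + 1, σ.rowEnd I (k + 1) + 1))) :=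
        (add_le_add (σ.sum_toggleOutBoxes_le hdef hI)
          (σ.sum_toggleInBoxes_le hdef hI)).trans_eq sum_add_distrib.symm
    _ = σ.jagBound / σ.b * ∑ k ∈ σ.descents I, ((σ.rowEnd I k : ℝ) - σ.rowEnd I (k + 1)) := by
        rw [mul_sum]
        exact sum_congr rfl fun k _ => σ.boxWeight_descent _ _ _
    _ = σ.jagBound := by
        rw [descents, sum_filter_lt_sub_eq (σ.rowEnd_antitone hI), σ.rowEnd_zero,
          σ.rowEnd_of_lt (lt_add_one σ.a)]
        field_simp
        simp

lemma expect_sum_filter (μ : Finset (ℕ × ℕ) → ℝ) (E : Finset (ℕ × ℕ) → ℕ × ℕ → Prop)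
    (g : ℕ × ℕ → ℝ) :
    σ.expect μ (fun I => ∑ p ∈ σ.cells.filter (E I), g p) =
      ∑ p ∈ σ.cells, g p * σ.pr μ (fun I => E I p) := by
  simp only [expect, pr, sum_filter, mul_sum]
  rw [sum_comm]
  refine sum_congr rfl fun p _ => sum_congr rfl fun I _ => ?_
  split_ifs <;> ring

lemma expect_jag_eq {μ : Finset (ℕ × ℕ) → ℝ} (hts : σ.ToggleSymmetric μ) (w : ℕ × ℕ → ℝ) :
    σ.expect μ (fun I => (σ.jag I : ℝ)) =
      σ.expect μ (fun I => ∑ p ∈ σ.toggleOutBoxes I, (1 - w p) +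
        ∑ p ∈ σ.toggleInBoxes I, (1 + w p)) := by
  have hbalance : σ.expect μ (fun I => ∑ p ∈ σ.toggleOutBoxes I, w p) =
      σ.expect μ (fun I => ∑ p ∈ σ.toggleInBoxes I, w p) := by
    simp only [toggleOutBoxes, toggleInBoxes, expect_sum_filter]
    exact sum_congr rfl fun p hp => by rw [hts p hp]
  have hjag : ∀ I, (σ.jag I : ℝ) = (∑ p ∈ σ.toggleOutBoxes I, (1 - w p) +
      ∑ p ∈ σ.toggleInBoxes I, (1 + w p)) +
      ∑ p ∈ σ.toggleOutBoxes I, w p - ∑ p ∈ σ.toggleInBoxes I, w p := by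
    intro I
    simp only [jag, toggleOutBoxes, toggleInBoxes, sum_sub_distrib, sum_add_distrib, sum_const,
      nsmul_eq_mul, mul_one]
    push_cast
    ring
  simp only [expect] at hbalance ⊢
  simp only [hjag, mul_add, mul_sub, sum_add_distrib, sum_sub_distrib, hbalance]
  ring

lemma expect_le_of_forall_le {μ : Finset (ℕ × ℕ) → ℝ} (hμ : σ.IsProbDist μ)
    {f : Finset (ℕ × ℕ) → ℝ} {c : ℝ} (h : ∀ I ∈ σ.idealsFinset, f I ≤ c) :
    σ.expect μ f ≤ c :=
  calc σ.expect μ f ≤ ∑ I ∈ σ.idealsFinset, μ I * c :=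
        sum_le_sum fun I hI => mul_le_mul_of_nonneg_left (h I hI) (hμ.1 I)
    _ = c := by rw [← sum_mul, hμ.2, one_mul]

end SkewShape

/-- Corollary 3.11, second part: for a deficient skew shape `σ` with
height `a` and width `b`, the expected jaggedness of a subshape with respect to any
toggle-symmetric probability distribution on `J(σ)` is at most `2ab/(a+b)`. -/
theorem SkewShape.expected_jaggedness_deficient (σ : SkewShape) (hdef : σ.Deficient)
    (μ : Finset (ℕ × ℕ) → ℝ) (hμ : σ.IsProbDist μ) (hts : σ.ToggleSymmetric μ) :
    σ.expect μ (fun I => (σ.jag I : ℝ)) ≤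
      2 * (σ.a : ℝ) * (σ.b : ℝ) / ((σ.a : ℝ) + (σ.b : ℝ)) := by
  rw [σ.expect_jag_eq hts σ.boxWeight]
  exact σ.expect_le_of_forall_le hμ fun I hI =>
    σ.sum_toggleOutBoxes_add_sum_toggleInBoxes_le hdef (σ.isIdeal_of_mem_idealsFinset hI)
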